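/- arXiv:math/0305414 — 7 statements merged into one kernel-verified Lean document; each statement's English description precedes it below -/
import Mathlib

section
/- For all φ with 0 < φ ≤ π, we have φ²/(2 - 2cos φ) ≤ 1 + φ²/2. -/
open Real

theorem Real.cos_le_one_sub_sq_div_two_add_pow_four_div_24 (x : ℝ) :
    cos x ≤ 1 - x ^ 2 / 2 + x ^ 4 / 24 := by
  rcases le_or_gt 12 (x ^ 2) with hbig | hsmall
  · nlinarith [cos_le_one x]
  -- `1 - cos x = 2 sin² t` and `|sin t| ≥ |t| - |t|³ / 6 ≥ 0` for `t = x / 2`, as `t² < 3`.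
  set a := |x / 2| with ha
  have hx : x ^ 2 = 4 * a ^ 2 := by rw [ha, sq_abs]; ring
  have hcos : cos x = 1 - 2 * sin (x / 2) ^ 2 := by
    have h := cos_two_mul' (x / 2)
    rw [mul_div_cancel₀ x two_ne_zero] at h
    linarith [cos_sq_add_sin_sq (x / 2)]
  have hsin : a - a ^ 3 / 6 ≤ |sin (x / 2)| := by
    linarith [abs_sub_abs_le_abs_sub (x / 2) (sin (x / 2)), abs_sub_sin_le (x / 2)]
  have hnonneg : 0 ≤ a - a ^ 3 / 6 := by nlinarith [abs_nonneg (x / 2)]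
  have hsq : (a - a ^ 3 / 6) ^ 2 ≤ sin (x / 2) ^ 2 := by
    rw [← sq_abs (sin (x / 2))]; exact pow_le_pow_left₀ hnonneg hsin 2
  rw [hcos, show x ^ 4 = (x ^ 2) ^ 2 by ring, hx]
  nlinarith [sq_nonneg (a ^ 3)]

theorem sq_div_two_sub_two_cos_bound (φ : ℝ) (h0 : 0 < φ) (h1 : φ ≤ Real.pi) :
    φ^2/(2 - 2*Real.cos φ) ≤ 1 + φ^2/2 := by
  have hφ10 : φ ^ 2 < 10 := by nlinarith [pi_lt_d2]
  have hcos := cos_le_one_sub_sq_div_two_add_pow_four_div_24 φ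
  have hden : 0 < 2 - 2 * cos φ := by nlinarith [pow_pos h0 2]
  rw [div_le_iff₀ hden]
  -- `(1 + φ² / 2) (φ² - φ⁴ / 12) = φ² + φ⁴ (10 - φ²) / 24`
  nlinarith [pow_pos h0 4]
end

section
/- For any two distinct points x, y on the unit circle in the plane, with arc(x,y) denoting the length of the shorter arc between them, we have 1/12 < 1/|x - y|² - 1/arc(x,y)² ≤ 1/4 - 1/π². -/
/-!
Put `t = angle x y / 2 ∈ (0, π/2]`. By the law of cosines `|x - y| = 2 sin t`, so the quantity
in question is `(1 / sin² t - 1 / t²) / 4`. Its derivative in `t` is `2 / t³ - 2 cos t / sin³ t`,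
which is nonnegative on `(0, π)` because `t³ cos t ≤ sin³ t`; this in turn follows from the
Taylor bounds `t - t³/6 ≤ sin t` and `cos t ≤ 1 - t²/2 + t⁴/24`. Monotonicity gives the upper
bound by evaluating at `t = π/2`. The lower bound `1/3` is the limit at `t = 0`; it holds
strictly because `sin t ≤ t - t³/6 + t⁵/120`.
-/

open Real Set InnerProductGeometry

namespace Real

theorem cos_le_one_sub_sq_div_two_add_quartic {x : ℝ} (hx : 0 ≤ x) :
    cos x ≤ 1 - x ^ 2 / 2 + x ^ 4 / 24 := by
  let f : ℝ → ℝ := fun t ↦ 1 - t ^ 2 / 2 + t ^ 4 / 24 - cos t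
  have hf : MonotoneOn f (Ici 0) := by
    refine monotoneOn_of_hasDerivWithinAt_nonneg (f' := fun t ↦ sin t - (t - t ^ 3 / 6))
      (convex_Ici 0) (by fun_prop) (fun t _ ↦ ?_) (fun t ht ↦ ?_)
    · exact (((hasDerivAt_pow 2 t).div_const 2).const_sub 1 |>.add
        ((hasDerivAt_pow 4 t).div_const 24)).sub (hasDerivAt_cos t)
        |>.congr_deriv (by ring) |>.hasDerivWithinAt
    · rw [interior_Ici] at ht
      exact sub_nonneg.2 (sin_ge_sub_cube ht.le)
  simpa [f] using hf self_mem_Ici hx hx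

theorem sin_le_sub_cube_add_quintic {x : ℝ} (hx : 0 ≤ x) :
    sin x ≤ x - x ^ 3 / 6 + x ^ 5 / 120 := by
  let f : ℝ → ℝ := fun t ↦ t - t ^ 3 / 6 + t ^ 5 / 120 - sin t
  have hf : MonotoneOn f (Ici 0) := by
    refine monotoneOn_of_hasDerivWithinAt_nonneg
      (f' := fun t ↦ 1 - t ^ 2 / 2 + t ^ 4 / 24 - cos t) (convex_Ici 0) (by fun_prop)
      (fun t _ ↦ ?_) (fun t ht ↦ ?_)
    · exact (((hasDerivAt_id t).sub ((hasDerivAt_pow 3 t).div_const 6)).add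
        ((hasDerivAt_pow 5 t).div_const 120)).sub (hasDerivAt_sin t)
        |>.congr_deriv (by ring) |>.hasDerivWithinAt
    · rw [interior_Ici] at ht
      exact sub_nonneg.2 (cos_le_one_sub_sq_div_two_add_quartic ht.le)
  simpa [f] using hf self_mem_Ici hx hx

theorem pow_three_mul_cos_le_sin_pow_three {t : ℝ} (h0 : 0 ≤ t) (hπ : t ≤ π) :
    t ^ 3 * cos t ≤ sin t ^ 3 := by
  rcases le_or_gt t 2 with h2 | h2
  · have hq : 0 ≤ 9 - t ^ 2 := by nlinarith
    calc t ^ 3 * cos t ≤ t ^ 3 * (1 - t ^ 2 / 2 + t ^ 4 / 24) :=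
          mul_le_mul_of_nonneg_left (cos_le_one_sub_sq_div_two_add_quartic h0) (by positivity)
      _ ≤ (t - t ^ 3 / 6) ^ 3 := by
          linear_combination (mul_nonneg (pow_nonneg h0 7) hq) / 216
      _ ≤ sin t ^ 3 := pow_le_pow_left₀ (by nlinarith) (sin_ge_sub_cube h0) 3
  · have hcos : cos t ≤ 0 := cos_nonpos_of_pi_div_two_le_of_le (by linarith [pi_le_four])
      (by linarith [pi_pos])
    have hsin : 0 ≤ sin t := sin_nonneg_of_nonneg_of_le_pi h0 hπ
    exact (mul_nonpos_of_nonneg_of_nonpos (by positivity) hcos).trans (by positivity)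

theorem monotoneOn_one_div_sin_sq_sub_one_div_sq :
    MonotoneOn (fun t ↦ 1 / sin t ^ 2 - 1 / t ^ 2) (Ioo 0 π) := by
  have hderiv : ∀ t ∈ Ioo 0 π, HasDerivAt (fun t ↦ 1 / sin t ^ 2 - 1 / t ^ 2)
      (2 / t ^ 3 - 2 * cos t / sin t ^ 3) t := by
    intro t ⟨h0, hπ⟩
    have hs : sin t ≠ 0 := (sin_pos_of_pos_of_lt_pi h0 hπ).ne'
    exact ((hasDerivAt_const t 1).div ((hasDerivAt_sin t).pow 2) (pow_ne_zero 2 hs)).sub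
      ((hasDerivAt_const t 1).div (hasDerivAt_pow 2 t) (pow_ne_zero 2 h0.ne')) |>.congr_deriv
      (by simp only [Pi.pow_apply]; field_simp; ring)
  refine monotoneOn_of_hasDerivWithinAt_nonneg
    (f' := fun t ↦ 2 / t ^ 3 - 2 * cos t / sin t ^ 3) (convex_Ioo 0 π)
    (fun t ht ↦ (hderiv t ht).continuousAt.continuousWithinAt) (fun t ht ↦ ?_) (fun t ht ↦ ?_)
  · rw [interior_Ioo] at ht
    exact (hderiv t ht).hasDerivWithinAt
  · rw [interior_Ioo] at ht
    obtain ⟨h0, hπ⟩ := ht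
    have hs := sin_pos_of_pos_of_lt_pi h0 hπ
    rw [sub_nonneg, div_le_div_iff₀ (by positivity) (by positivity)]
    nlinarith [pow_three_mul_cos_le_sin_pow_three h0.le hπ.le]

theorem one_third_lt_one_div_sin_sq_sub_one_div_sq {t : ℝ} (h0 : 0 < t) (hπ : t < π) :
    1 / 3 < 1 / sin t ^ 2 - 1 / t ^ 2 := by
  have hs := sin_pos_of_pos_of_lt_pi h0 hπ
  have hu : t ^ 2 ≤ 10 := by nlinarith [pi_lt_d2]
  have hp : sin t ^ 2 ≤ (t - t ^ 3 / 6 + t ^ 5 / 120) ^ 2 :=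
    pow_le_pow_left₀ hs.le (sin_le_sub_cube_add_quintic h0.le) 2
  -- with `u = t²`: `3 - (1 - u/6 + u²/120)² (3 + u) = u² (2880 - 520 u + 37 u² - u³) / 14400`
  have hq : 0 < 2880 - 520 * t ^ 2 + 37 * (t ^ 2) ^ 2 - (t ^ 2) ^ 3 := by
    nlinarith [mul_nonneg (sq_nonneg (t ^ 2)) (sub_nonneg.2 hu), sq_nonneg (t ^ 2 - 10)]
  rw [lt_sub_iff_add_lt', div_add_div _ _ (by positivity) (by positivity),
    div_lt_div_iff₀ (by positivity) (by positivity)]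
  nlinarith [mul_pos (pow_pos h0 6) hq]

end Real

theorem InnerProductGeometry.dist_sq_eq_four_mul_sin_sq_half_angle {V : Type*}
    [NormedAddCommGroup V] [InnerProductSpace ℝ V] {x y : V} (hx : ‖x‖ = 1) (hy : ‖y‖ = 1) :
    dist x y ^ 2 = 4 * sin (angle x y / 2) ^ 2 := by
  have h := norm_sub_sq_eq_norm_sq_add_norm_sq_sub_two_mul_norm_mul_norm_mul_cos_angle x y
  rw [hx, hy] at h
  rw [dist_eq_norm, sq, h, sin_sq_eq_half_sub, show 2 * (angle x y / 2) = angle x y by ring]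
  ring

/-- On the unit circle (centered at the origin), with `arc(x,y)` the length of the
shorter arc (equal to the angle between `x` and `y` as vectors). -/
theorem unit_circle_chord_arc_bounds (x y : EuclideanSpace ℝ (Fin 2))
    (hx : ‖x‖ = 1) (hy : ‖y‖ = 1) (hxy : x ≠ y) :
    1/12 < 1/dist x y^2 - 1/(angle x y)^2 ∧
    1/dist x y^2 - 1/(angle x y)^2 ≤ 1/4 - 1/Real.pi^2 := by
  set θ := angle x y
  have hd : dist x y ^ 2 = 4 * sin (θ / 2) ^ 2 := dist_sq_eq_four_mul_sin_sq_half_angle hx hy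
  have hθ : 0 < θ := (angle_nonneg x y).lt_of_ne fun h ↦ hxy <| by
    change 0 = θ at h
    rw [← h] at hd
    simpa using hd
  have ht : θ / 2 ∈ Ioo 0 π := ⟨by positivity, by linarith [angle_le_pi x y, pi_pos]⟩
  have hhalf : 1 / dist x y ^ 2 - 1 / θ ^ 2 = (1 / sin (θ / 2) ^ 2 - 1 / (θ / 2) ^ 2) / 4 := by
    rw [hd]; ring
  have hπ : π / 2 ∈ Ioo 0 π := ⟨by positivity, by linarith [pi_pos]⟩
  have hupper : 1 / sin (θ / 2) ^ 2 - 1 / (θ / 2) ^ 2 ≤ 1 / sin (π / 2) ^ 2 - 1 / (π / 2) ^ 2 :=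
    monotoneOn_one_div_sin_sq_sub_one_div_sq ht hπ (by linarith [angle_le_pi x y])
  have hend : 1 / sin (π / 2) ^ 2 - 1 / (π / 2) ^ 2 = 4 * (1 / 4 - 1 / π ^ 2) := by
    rw [sin_pi_div_two]; ring
  rw [hhalf]
  constructor
  · linarith [one_third_lt_one_div_sin_sq_sub_one_div_sq ht.1 ht.2]
  · linarith
end

section
/- Let x : [0, πr] → ℝ³ be a C² unit-speed curve whose curvature satisfies |x''(u)| ≤ 1/r everywhere, for some r > 0. Then the function t ↦ |x(t) - x(0)| is strictly monotone increasing on (0, πr); equivalently, for 0 < t < πr, the derivative of t ↦ |x(t) - x(0)|² is positive. -/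
/-!
The unit tangent `T = x'` is a curve on the unit sphere of speed at most `1 / r`, so the angle
between `T u` and `T τ` is at most `(τ - u) / r`: a chord of length `d` subtends an angle at most
`d + d ^ 3`, and the cubic errors vanish along finer and finer subdivisions. For `τ < π r` this
gives `cos ((τ - u) / r) ≤ ⟪T u, T τ⟫`, and integrating over `u ∈ [0, τ]` yields
`r sin (τ / r) ≤ ⟪T τ, x τ - x 0⟫`. The right-hand side is half the derivative of
`‖x τ - x 0‖ ^ 2`, which is therefore strictly increasing on `[0, π r]`.
-/

open Real Set InnerProductGeometry
open scoped NNReal RealInnerProductSpace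

section

variable {E : Type*} [NormedAddCommGroup E] [InnerProductSpace ℝ E]

theorem angle_le_norm_sub_add_cube {u v : E} (hu : ‖u‖ = 1) (hv : ‖v‖ = 1) :
    angle u v ≤ ‖u - v‖ + ‖u - v‖ ^ 3 := by
  set θ := angle u v
  set s := sin (θ / 2)
  have hθ0 : 0 ≤ θ := angle_nonneg u v
  have hθπ : θ ≤ π := angle_le_pi u v
  have hs0 : 0 ≤ s := sin_nonneg_of_nonneg_of_le_pi (by positivity) (by linarith)
  have hchord : ‖u - v‖ = 2 * s := by
    have hinner : ⟪u, v⟫ = cos θ := by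
      simpa [hu, hv] using (cos_angle_mul_norm_mul_norm u v).symm
    have hsq : ‖u - v‖ ^ 2 = (2 * s) ^ 2 := by
      have := sin_sq_eq_half_sub (θ / 2)
      rw [mul_div_cancel₀ θ two_ne_zero] at this
      rw [norm_sub_sq_real, hu, hv, hinner]
      linear_combination (-4) * this
    exact (sq_eq_sq₀ (norm_nonneg _) (by positivity)).1 hsq
  have hlin : θ ≤ π * s := by
    have h : θ / π ≤ s := by
      convert mul_le_sin (x := θ / 2) (by positivity) (by linarith) using 1
      field_simp
    exact (div_le_iff₀' pi_pos).1 h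
  have hcube : θ / 2 - (θ / 2) ^ 3 / 6 ≤ s := sin_ge_sub_cube (by positivity)
  have hθ3 : θ ^ 3 ≤ (π * s) ^ 3 := pow_le_pow_left₀ hθ0 hlin 3
  have hπ3 : π ^ 3 ≤ 4 ^ 3 := pow_le_pow_left₀ pi_pos.le pi_lt_four.le 3
  rw [hchord]
  nlinarith [pow_nonneg hs0 3]

theorem angle_le_of_lipschitzOnWith_of_uniform_steps {γ : ℝ → E} {K : ℝ≥0} {a b : ℝ}
    (hγ : LipschitzOnWith K γ (Icc a b)) (hunit : ∀ t ∈ Icc a b, ‖γ t‖ = 1) {h : ℝ} (hh : 0 ≤ h)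
    (n : ℕ) (hn : a + n * h ≤ b) :
    angle (γ a) (γ (a + n * h)) ≤ n * (K * h + (K * h) ^ 3) := by
  induction n with
  | zero =>
    have ha : a ∈ Icc a b := ⟨le_rfl, by simpa using hn⟩
    simp [angle_self (norm_ne_zero_iff.1 ((hunit a ha).trans_ne one_ne_zero))]
  | succ n ih =>
    push_cast at hn ⊢
    have hp : a + n * h ∈ Icc a b := ⟨by nlinarith [n.cast_nonneg (α := ℝ)], by linarith⟩
    have hq : a + (n + 1) * h ∈ Icc a b := ⟨by nlinarith [n.cast_nonneg (α := ℝ)], hn⟩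
    have hstep : ‖γ (a + n * h) - γ (a + (n + 1) * h)‖ ≤ K * h := by
      have := hγ.dist_le_mul _ hp _ hq
      rwa [dist_eq_norm, Real.dist_eq, abs_of_nonpos (by linarith), neg_sub,
        show a + (n + 1) * h - (a + n * h) = h by ring] at this
    calc angle (γ a) (γ (a + (n + 1) * h))
        ≤ angle (γ a) (γ (a + n * h)) + angle (γ (a + n * h)) (γ (a + (n + 1) * h)) :=
          angle_le_angle_add_angle _ _ _
      _ ≤ n * (K * h + (K * h) ^ 3) + (K * h + (K * h) ^ 3) := by
          gcongr
          · exact ih (by linarith)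
          · refine (angle_le_norm_sub_add_cube (hunit _ hp) (hunit _ hq)).trans ?_
            gcongr
      _ = (n + 1) * (K * h + (K * h) ^ 3) := by ring

theorem angle_le_mul_of_lipschitzOnWith {γ : ℝ → E} {K : ℝ≥0} {a b : ℝ}
    (hγ : LipschitzOnWith K γ (Icc a b)) (hunit : ∀ t ∈ Icc a b, ‖γ t‖ = 1) (hab : a ≤ b) :
    angle (γ a) (γ b) ≤ K * (b - a) := by
  set D : ℝ := K * (b - a)
  have hD : 0 ≤ D := by positivity
  have hbound : ∀ n : ℕ, 1 ≤ n → angle (γ a) (γ b) ≤ D + D ^ 3 / n := by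
    intro n hn
    have hn0 : (0 : ℝ) < n := by exact_mod_cast hn
    have hsteps := angle_le_of_lipschitzOnWith_of_uniform_steps hγ hunit
      (div_nonneg (sub_nonneg.2 hab) hn0.le) n (by field_simp; linarith)
    rw [mul_div_cancel₀ _ hn0.ne', add_sub_cancel, ← mul_div_assoc,
      show n * (D / n + (D / n) ^ 3) = D + D ^ 3 / n ^ 2 by field_simp] at hsteps
    refine hsteps.trans (add_le_add_right (div_le_div_of_nonneg_left (pow_nonneg hD 3) hn0 ?_) _)
    exact_mod_cast Nat.le_self_pow two_ne_zero n
  have hlim : Filter.Tendsto (fun n : ℕ => D + D ^ 3 / n) Filter.atTop (nhds D) := by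
    simpa using tendsto_const_nhds.add (tendsto_const_div_atTop_nhds_zero_nat (D ^ 3))
  exact ge_of_tendsto hlim (Filter.eventually_atTop.2 ⟨1, hbound⟩)

theorem cos_mul_le_inner_of_lipschitzOnWith {γ : ℝ → E} {K : ℝ≥0} {a b : ℝ}
    (hγ : LipschitzOnWith K γ (Icc a b)) (hunit : ∀ t ∈ Icc a b, ‖γ t‖ = 1) (hab : a ≤ b)
    (hπ : K * (b - a) ≤ π) : cos (K * (b - a)) ≤ ⟪γ a, γ b⟫ := by
  have hcos : cos (angle (γ a) (γ b)) = ⟪γ a, γ b⟫ := by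
    rw [cos_angle, hunit a ⟨le_rfl, hab⟩, hunit b ⟨hab, le_rfl⟩, mul_one, div_one]
  rw [← hcos]
  exact cos_le_cos_of_nonneg_of_le_pi (angle_nonneg _ _) hπ
    (angle_le_mul_of_lipschitzOnWith hγ hunit hab)

theorem sin_le_mul_inner_deriv_sub_of_cos_le {x : ℝ → E} (hx : Differentiable ℝ x) {K a τ : ℝ}
    (hK : 0 ≤ K) (haτ : a ≤ τ)
    (hcos : ∀ u ∈ Icc a τ, cos (K * (τ - u)) ≤ ⟪deriv x u, deriv x τ⟫) :
    sin (K * (τ - a)) ≤ K * ⟪deriv x τ, x τ - x a⟫ := by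
  set φ : ℝ → ℝ := fun u => K * ⟪deriv x τ, x u⟫ + sin (K * (τ - u))
  have hφ : ∀ u, HasDerivAt φ (K * (⟪deriv x u, deriv x τ⟫ - cos (K * (τ - u)))) u := by
    intro u
    have hsin := ((hasDerivAt_id u).const_sub τ).const_mul K |>.sin
    have hinner := ((hasDerivAt_const u (deriv x τ)).inner ℝ (hx u).hasDerivAt).const_mul K
    refine (hinner.add hsin).congr_deriv ?_
    rw [inner_zero_left, add_zero, real_inner_comm (deriv x τ), id]
    ring
  have hmono : MonotoneOn φ (Icc a τ) := by
    refine monotoneOn_of_hasDerivWithinAt_nonneg (convex_Icc a τ)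
      (fun u _ => (hφ u).continuousAt.continuousWithinAt) (fun u _ => (hφ u).hasDerivWithinAt) ?_
    rw [interior_Icc]
    exact fun u hu => mul_nonneg hK (sub_nonneg.2 (hcos u (Ioo_subset_Icc_self hu)))
  have := hmono ⟨le_rfl, haτ⟩ ⟨haτ, le_rfl⟩ haτ
  simp only [φ, sub_self, mul_zero, sin_zero, add_zero] at this
  rw [inner_sub_right]
  linarith

theorem strictMonoOn_norm_sub_of_inner_deriv_pos {x : ℝ → E} (hx : Differentiable ℝ x) {a b : ℝ}
    (hpos : ∀ t ∈ Ioo a b, 0 < ⟪deriv x t, x t - x a⟫) :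
    StrictMonoOn (fun t => ‖x t - x a‖) (Icc a b) := by
  have hsq : ∀ t, HasDerivAt (fun t => ‖x t - x a‖ ^ 2) (2 * ⟪x t - x a, deriv x t⟫) t :=
    fun t => ((hx t).hasDerivAt.sub_const (x a)).norm_sq
  have hmono : StrictMonoOn (fun t => ‖x t - x a‖ ^ 2) (Icc a b) := by
    refine strictMonoOn_of_hasDerivWithinAt_pos (convex_Icc a b)
      (fun t _ => (hsq t).continuousAt.continuousWithinAt) (fun t _ => (hsq t).hasDerivWithinAt) ?_
    rw [interior_Icc]
    exact fun t ht => by rw [real_inner_comm]; linarith [hpos t ht]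
  exact fun s hs t ht hst => lt_of_pow_lt_pow_left₀ 2 (norm_nonneg _) (hmono hs ht hst)

theorem inner_deriv_sub_pos_of_lipschitzOnWith_deriv {x : ℝ → E} (hx : Differentiable ℝ x)
    {K : ℝ≥0} {a τ : ℝ} (hlip : LipschitzOnWith K (deriv x) (Icc a τ))
    (hunit : ∀ t ∈ Icc a τ, ‖deriv x t‖ = 1) (hK : 0 < K) (haτ : a < τ)
    (hπ : K * (τ - a) < π) : 0 < ⟪deriv x τ, x τ - x a⟫ := by
  have hcos : ∀ u ∈ Icc a τ, cos (K * (τ - u)) ≤ ⟪deriv x u, deriv x τ⟫ := fun u hu =>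
    cos_mul_le_inner_of_lipschitzOnWith (hlip.mono (Icc_subset_Icc_left hu.1))
      (fun t ht => hunit t ⟨hu.1.trans ht.1, ht.2⟩) hu.2
      (hπ.le.trans' (by gcongr; exact hu.1))
  have hsin : 0 < sin (K * (τ - a)) :=
    sin_pos_of_pos_of_lt_pi (mul_pos hK (sub_pos.2 haτ)) hπ
  exact pos_of_mul_pos_right
    (hsin.trans_le (sin_le_mul_inner_deriv_sub_of_cos_le hx K.2 haτ.le hcos)) K.2

end

/-- A unit-speed `C²` curve with curvature at most `1/r`: chord length from the
initial point is strictly increasing for arc-length up to `π r`. -/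
theorem monotone_chord_length (r : ℝ) (hr : 0 < r)
    (x : ℝ → EuclideanSpace ℝ (Fin 3)) (hC2 : ContDiff ℝ 2 x)
    (hunit : ∀ t ∈ Set.Icc 0 (Real.pi * r), ‖deriv x t‖ = 1)
    (hcurv : ∀ u ∈ Set.Icc 0 (Real.pi * r), ‖deriv (deriv x) u‖ ≤ 1/r) :
    ∀ s t : ℝ, 0 < s → s < t → t ≤ Real.pi * r →
      ‖x s - x 0‖ < ‖x t - x 0‖ := by
  intro s t hs hst ht
  have hx : Differentiable ℝ x := hC2.differentiable (by norm_num)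
  set K := (1 / r).toNNReal
  have hK : (K : ℝ) = 1 / r := Real.coe_toNNReal _ (by positivity)
  have hlip : LipschitzOnWith K (deriv x) (Icc 0 (π * r)) :=
    Convex.lipschitzOnWith_of_nnnorm_deriv_le (fun u _ => hC2.differentiable_deriv_two u)
      (fun u hu => by rw [← NNReal.coe_le_coe, coe_nnnorm, hK]; exact hcurv u hu) (convex_Icc _ _)
  have hpos : ∀ τ ∈ Ioo 0 (π * r), 0 < ⟪deriv x τ, x τ - x 0⟫ := fun τ hτ =>
    inner_deriv_sub_pos_of_lipschitzOnWith_deriv hx (hlip.mono (Icc_subset_Icc_right hτ.2.le))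
      (fun u hu => hunit u ⟨hu.1, hu.2.trans hτ.2.le⟩) (by simpa [← NNReal.coe_pos, hK]) hτ.1
      (by rw [hK, sub_zero, one_div_mul_eq_div, div_lt_iff₀ hr]; exact hτ.2)
  exact strictMonoOn_norm_sub_of_inner_deriv_pos hx hpos ⟨hs.le, by linarith⟩
    ⟨by linarith, ht⟩ hst
end

section
/- Let x : [0, πr] → ℝ³ be a C² unit-speed curve with curvature bounded by 1/r, and let 0 < t < πr. Then (x(t) - x(0)) · x'(t) ≥ r·sin(t/r) > 0. -/
/-!
For the unit tangent `u = x'` and fixed `a`, the function `k(s) = ⟪u a, u s⟫` satisfies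
`|k'| ≤ √(1 - k²) / r`, because `u' ⊥ u`. Comparing with `cos ((s - a) / r)`, which solves the
extremal equation, gives `k(s) ≥ cos ((s - a) / r)` while `(s - a) / r < π`. Hence
`⟪x' s, x' t⟫ ≥ cos ((t - s) / r)` for `s ∈ [0, t]`, and integrating in `s` gives
`⟪x t - x 0, x' t⟫ ≥ r sin (t / r)`.
-/

open RealInnerProductSpace

open Real Set Filter Topology

section

variable {E : Type*} [NormedAddCommGroup E] [InnerProductSpace ℝ E]

theorem inner_eq_zero_of_hasDerivWithinAt_of_norm_eq {u : ℝ → E} {u' : E} {s b c : ℝ}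
    (hsb : s < b) (hu : HasDerivWithinAt u u' (Ici s) s) (hnorm : ∀ τ ∈ Icc s b, ‖u τ‖ = c) :
    ⟪u s, u'⟫ = 0 := by
  have hsq : HasDerivWithinAt (fun τ => ⟪u τ, u τ⟫) (⟪u s, u'⟫ + ⟪u', u s⟫) (Ici s) s :=
    hu.inner ℝ hu
  have hconst : (fun τ => ⟪u τ, u τ⟫) =ᶠ[𝓝[≥] s] fun _ => c ^ 2 := by
    filter_upwards [Icc_mem_nhdsGE hsb] with τ hτ
    rw [real_inner_self_eq_norm_sq, hnorm τ hτ]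
  have hderiv := (uniqueDiffWithinAt_Ici s).eq_deriv _ hsq <|
    (hasDerivWithinAt_const s _ (c ^ 2)).congr_of_eventuallyEq hconst
      (hconst.eq_of_nhdsWithin self_mem_Ici)
  rw [real_inner_comm (u s) u'] at hderiv
  linarith

theorem abs_inner_le_sqrt_mul_norm_of_inner_eq_zero {v w d : E} (hv : ‖v‖ = 1) (hw : ‖w‖ = 1)
    (hd : ⟪w, d⟫ = 0) : |⟪v, d⟫| ≤ √(1 - ⟪v, w⟫ ^ 2) * ‖d‖ := by
  have hproj : ⟪v, d⟫ = ⟪v - ⟪v, w⟫ • w, d⟫ := by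
    rw [inner_sub_left, real_inner_smul_left, hd, mul_zero, sub_zero]
  have hnorm : ‖v - ⟪v, w⟫ • w‖ = √(1 - ⟪v, w⟫ ^ 2) := by
    have hvv : ⟪v, v⟫ = 1 := by rw [real_inner_self_eq_norm_sq, hv, one_pow]
    have hww : ⟪w, w⟫ = 1 := by rw [real_inner_self_eq_norm_sq, hw, one_pow]
    rw [← sqrt_sq (norm_nonneg _), ← real_inner_self_eq_norm_sq]
    congr 1
    simp only [inner_sub_left, inner_sub_right, real_inner_smul_left, real_inner_smul_right,
      hvv, hww, real_inner_comm v w]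
    ring
  rw [hproj, ← hnorm]
  exact abs_real_inner_le_norm _ _

variable {u u' : ℝ → E} {a b κ : ℝ}

theorem cos_add_le_inner_of_norm_deriv_lt (hab : a ≤ b) (hu : ContinuousOn u (Icc a b))
    (hu' : ∀ s ∈ Ico a b, HasDerivWithinAt u (u' s) (Ici s) s)
    (hunit : ∀ s ∈ Icc a b, ‖u s‖ = 1) (hcurv : ∀ s ∈ Ico a b, ‖u' s‖ ≤ κ)
    {c δ : ℝ} (hκc : κ < c) (hδ : 0 < δ) (hπ : c * (b - a) + δ < π) :
    cos (c * (b - a) + δ) ≤ ⟪u a, u b⟫ := by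
  -- The comparison principle wants a strict inequality where `k` touches the barrier; the speed
  -- `c > κ` provides it for `s > a`, the phase `δ > 0` at `s = a`, where `k' = 0`.
  suffices ∀ s ∈ Icc a b, -⟪u a, u s⟫ ≤ -cos (c * (s - a) + δ) from
    neg_le_neg_iff.mp (this b ⟨hab, le_rfl⟩)
  refine image_le_of_deriv_right_lt_deriv_boundary' (f' := fun s => -⟪u a, u' s⟫)
    (B := fun s => -cos (c * (s - a) + δ)) (B' := fun s => c * sin (c * (s - a) + δ))
    (by fun_prop) (fun s hs => ?_) (by simp [hunit a ⟨le_rfl, hab⟩, cos_le_one])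
    (by fun_prop) (fun s _ => ?_) (fun s hs heq => ?_)
  · exact (((hasDerivWithinAt_const s _ (u a)).inner ℝ (hu' s hs)).neg).congr_deriv (by simp)
  · exact ((((hasDerivAt_id' s).sub_const a).const_mul c).add_const δ).cos.neg.hasDerivWithinAt
      |>.congr_deriv (by ring)
  · set φ := c * (s - a) + δ
    have hc : 0 < c := (norm_nonneg _).trans (hcurv s hs) |>.trans_lt hκc
    have hφ : 0 < φ := by
      have hlin : 0 ≤ c * (s - a) := mul_nonneg hc.le (sub_nonneg.2 hs.1)
      positivity
    have hφπ : φ < π := by nlinarith [hs.2]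
    have hperp := inner_eq_zero_of_hasDerivWithinAt_of_norm_eq hs.2 (hu' s hs)
      fun τ hτ => hunit τ ⟨hs.1.trans hτ.1, hτ.2⟩
    have hsq : √(1 - ⟪u a, u s⟫ ^ 2) = sin φ := by
      rw [neg_inj.mp heq, sin_eq_sqrt_one_sub_cos_sq hφ.le hφπ.le]
    calc -⟪u a, u' s⟫ ≤ |⟪u a, u' s⟫| := neg_le_abs _
      _ ≤ sin φ * ‖u' s‖ := hsq ▸ abs_inner_le_sqrt_mul_norm_of_inner_eq_zero
          (hunit a ⟨le_rfl, hab⟩) (hunit s (Ico_subset_Icc_self hs)) hperp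
      _ ≤ sin φ * κ := by gcongr; exacts [(sin_pos_of_pos_of_lt_pi hφ hφπ).le, hcurv s hs]
      _ < c * sin φ := by nlinarith [sin_pos_of_pos_of_lt_pi hφ hφπ]

theorem cos_le_inner_of_norm_deriv_le (hab : a ≤ b) (hu : ContinuousOn u (Icc a b))
    (hu' : ∀ s ∈ Ico a b, HasDerivWithinAt u (u' s) (Ici s) s)
    (hunit : ∀ s ∈ Icc a b, ‖u s‖ = 1) (hcurv : ∀ s ∈ Ico a b, ‖u' s‖ ≤ κ)
    (hπ : κ * (b - a) < π) : cos (κ * (b - a)) ≤ ⟪u a, u b⟫ := by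
  have hphase : Tendsto (fun ε => (κ + ε) * (b - a) + ε) (𝓝[>] 0) (𝓝 (κ * (b - a))) := by
    have := ((continuous_const.add continuous_id).mul continuous_const).add continuous_id
      |>.tendsto (f := fun ε : ℝ => (κ + ε) * (b - a) + ε) 0
    simpa using this.mono_left nhdsWithin_le_nhds
  refine le_of_tendsto (continuous_cos.continuousAt.tendsto.comp hphase) ?_
  filter_upwards [hphase.eventually_lt_const hπ, self_mem_nhdsWithin] with ε hε hε0
  exact cos_add_le_inner_of_norm_deriv_lt hab hu hu' hunit hcurv (lt_add_of_pos_right κ hε0)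
    hε0 hε

theorem inner_sub_eq_integral_inner_deriv {x : ℝ → E} (hx : ContDiff ℝ 1 x) (w : E) (a b : ℝ) :
    ⟪x b - x a, w⟫ = ∫ s in a..b, ⟪deriv x s, w⟫ := by
  rw [inner_sub_left]
  refine (intervalIntegral.integral_eq_sub_of_hasDerivAt (f := fun s => ⟪x s, w⟫)
    (fun s _ => ?_) ?_).symm
  · exact ((hx.differentiable one_ne_zero s).hasDerivAt.inner ℝ
      (hasDerivAt_const s w)).congr_deriv (by simp)
  · exact ((hx.continuous_deriv le_rfl).inner continuous_const).intervalIntegrable _ _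

end

theorem integral_cos_sub_div (t r : ℝ) (hr : r ≠ 0) :
    ∫ s in 0..t, cos ((t - s) / r) = r * sin (t / r) := by
  simp [intervalIntegral.integral_comp_sub_left (fun s => cos (s / r)),
    intervalIntegral.integral_comp_div _ hr]

theorem chord_tangent_inner_pos (r : ℝ) (hr : 0 < r)
    (x : ℝ → EuclideanSpace ℝ (Fin 3)) (hC2 : ContDiff ℝ 2 x)
    (hunit : ∀ t ∈ Set.Icc 0 (Real.pi * r), ‖deriv x t‖ = 1)
    (hcurv : ∀ u ∈ Set.Icc 0 (Real.pi * r), ‖deriv (deriv x) u‖ ≤ 1/r)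
    (t : ℝ) (ht0 : 0 < t) (ht : t < Real.pi * r) :
    r * Real.sin (t/r) ≤ ⟪x t - x 0, deriv x t⟫ ∧ 0 < r * Real.sin (t/r) := by
  have hx' : ContDiff ℝ 1 (deriv x) := hC2.deriv'
  have hsub : ∀ {s}, s ∈ Icc 0 t → Icc s t ⊆ Icc 0 (π * r) :=
    fun hs => Icc_subset_Icc hs.1 ht.le
  have htangent : ∀ s ∈ Icc 0 t, cos ((t - s) / r) ≤ ⟪deriv x s, deriv x t⟫ := by
    intro s hs
    have hπ : 1 / r * (t - s) < π := by
      rw [one_div_mul_eq_div, div_lt_iff₀ hr]; linarith [hs.1]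
    simpa [div_eq_inv_mul] using cos_le_inner_of_norm_deriv_le hs.2 hx'.continuous.continuousOn
      (fun τ _ => (hx'.differentiable one_ne_zero τ).hasDerivAt.hasDerivWithinAt)
      (fun τ hτ => hunit τ (hsub hs hτ))
      (fun τ hτ => hcurv τ (hsub hs (Ico_subset_Icc_self hτ))) hπ
  refine ⟨?_, mul_pos hr (sin_pos_of_pos_of_lt_pi (div_pos ht0 hr) ((div_lt_iff₀ hr).2 ht))⟩
  calc r * sin (t / r) = ∫ s in 0..t, cos ((t - s) / r) := (integral_cos_sub_div t r hr.ne').symm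
    _ ≤ ∫ s in 0..t, ⟪deriv x s, deriv x t⟫ :=
      intervalIntegral.integral_mono_on ht0.le
        ((by fun_prop : Continuous fun s => cos ((t - s) / r)).intervalIntegrable _ _)
        ((hx'.continuous.inner continuous_const).intervalIntegrable _ _) htangent
    _ = ⟪x t - x 0, deriv x t⟫ :=
      (inner_sub_eq_integral_inner_deriv (hC2.of_le one_le_two) _ _ _).symm
end

section
/- Let x : [0, π] → ℝ³ be a C² unit-speed curve with |x''| ≤ 1, and let 0 ≤ a < b < c < d ≤ π. Then the minimum Euclidean distance between the line segments [x(a), x(b)] and [x(c), x(d)] equals |x(c) - x(b)|. -/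
/-!
The unit tangent `x'` is a curve on the unit sphere whose speed is the curvature, hence at most
`1`; so for parameters `w ≤ v` at distance at most `π` the angle between `x' w` and `x' v` is at
most `v - w`, i.e. `cos (v - w) ≤ ⟪x' v, x' w⟫`. Integrating this twice gives, for
`s ≤ t ≤ u` with `u - s ≤ π`,
`⟪x u - x t, x t - x s⟫ ≥ cos (u - t) + cos (t - s) - cos (u - s) - 1 ≥ 0`.
Thus the chords `[x a, x b]`, `[x b, x c]`, `[x c, x d]` meet at non-obtuse turning angles, and
projecting onto the direction `x c - x b` shows that no two points of the outer chords are
closer than `x b` and `x c`.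
-/

open Real Set InnerProductGeometry
open scoped RealInnerProductSpace

theorem Real.one_add_cos_add_le_cos_add_cos {A B : ℝ} (hA : 0 ≤ A) (hB : 0 ≤ B)
    (hAB : A + B ≤ π) : 1 + cos (A + B) ≤ cos A + cos B := by
  have hc : 0 ≤ cos ((A + B) / 2) := cos_nonneg_of_mem_Icc ⟨by linarith, by linarith⟩
  have hle : cos ((A + B) / 2) ≤ cos ((A - B) / 2) := by
    rw [← cos_abs ((A - B) / 2)]
    exact cos_le_cos_of_nonneg_of_le_pi (abs_nonneg _) (by linarith)
      (abs_le.2 ⟨by linarith, by linarith⟩)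
  have hsq : 1 + cos (A + B) = 2 * cos ((A + B) / 2) ^ 2 := by
    rw [cos_sq, show 2 * ((A + B) / 2) = A + B by ring]; ring
  rw [cos_add_cos, hsq]
  nlinarith

theorem Real.hasDerivAt_two_mul_arcsin_sub_div_two (x : ℝ) :
    HasDerivAt (fun z => 2 * arcsin ((z - x) / 2)) 1 x := by
  have := (hasDerivAt_arcsin (x := 0) (by norm_num) (by norm_num)).comp_of_eq x
    (((hasDerivAt_id x).sub_const x).div_const 2) (by simp)
  exact (this.const_mul 2).congr_deriv (by norm_num)

variable {E : Type*} [NormedAddCommGroup E] [InnerProductSpace ℝ E]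

theorem InnerProductGeometry.angle_eq_two_mul_arcsin_of_norm_eq_one {p q : E}
    (hp : ‖p‖ = 1) (hq : ‖q‖ = 1) : angle p q = 2 * arcsin (‖p - q‖ / 2) := by
  have hsq : (‖p - q‖ / 2) ^ 2 = 1 / 2 - cos (angle p q) / 2 := by
    rw [div_pow, norm_sub_sq_real, hp, hq, ← cos_angle_mul_norm_mul_norm, hp, hq]; ring
  have hθ : 0 ≤ angle p q / 2 ∧ angle p q / 2 ≤ π / 2 := by
    constructor <;> linarith [angle_nonneg p q, angle_le_pi p q]
  generalize angle p q = θ at hsq hθ ⊢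
  have hsin : ‖p - q‖ / 2 = sin (θ / 2) := by
    refine (sq_eq_sq₀ (by positivity) (sin_nonneg_of_nonneg_of_le_pi hθ.1 (by linarith))).1 ?_
    rw [hsq, sin_sq, cos_sq, show 2 * (θ / 2) = θ by ring]
    ring
  rw [hsin, arcsin_sin (by linarith) hθ.2]
  ring

theorem angle_le_sub_of_lipschitzOnWith {y : ℝ → E} {w v : ℝ} (hwv : w ≤ v)
    (hy : LipschitzOnWith 1 y (Icc w v)) (hnorm : ∀ t ∈ Icc w v, ‖y t‖ = 1) :
    angle (y w) (y v) ≤ v - w := by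
  have hne : ∀ t ∈ Icc w v, y t ≠ 0 := fun t ht => by
    simp [← norm_ne_zero_iff, hnorm t ht]
  have hchord : ∀ z ∈ Icc w v, ∀ z' ∈ Icc w v, z ≤ z' →
      angle (y z) (y z') ≤ 2 * arcsin ((z' - z) / 2) := by
    intro z hz z' hz' hzz'
    have := hy.dist_le_mul z hz z' hz'
    rw [NNReal.coe_one, one_mul, dist_eq_norm, Real.dist_eq, abs_sub_comm,
      abs_of_nonneg (sub_nonneg.2 hzz')] at this
    rw [angle_eq_two_mul_arcsin_of_norm_eq_one (hnorm z hz) (hnorm z' hz')]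
    gcongr
  -- Since `2 * arcsin (δ / 2) = δ + o(δ)`, the angle has right Dini derivative at most `1`.
  refine image_le_of_liminf_slope_right_le_deriv_boundary (f := fun z => angle (y w) (y z))
    (B' := fun _ => 1) (fun z hz => ?_) ?_ (by fun_prop)
    (fun z _ => ((hasDerivAt_id z).sub_const w).hasDerivWithinAt) (fun z hz r hr => ?_)
    ⟨hwv, le_rfl⟩
  · have hpair : ContinuousWithinAt (fun t => (y w, y t)) (Icc w v) z :=
      continuousWithinAt_const.prodMk (hy.continuousOn z hz)
    exact ContinuousAt.comp_continuousWithinAt (f := fun t => (y w, y t))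
      (continuousAt_angle (x := (y w, y z)) (hne w ⟨le_rfl, hwv⟩) (hne z hz)) hpair
  · simp [angle_self (hne w ⟨le_rfl, hwv⟩)]
  · have hslope := (hasDerivAt_two_mul_arcsin_sub_div_two z).tendsto_slope.mono_left
      (nhdsGT_le_nhdsNE z)
    refine ((hslope.eventually (gt_mem_nhds hr)).and (Ioc_mem_nhdsGT hz.2)).frequently.mono ?_
    rintro z' ⟨hlt, hz'⟩
    refine lt_of_le_of_lt ?_ hlt
    have hzz' : 0 < z' - z := sub_pos.2 hz'.1
    rw [slope_def_field, slope_def_field]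
    gcongr ?_ / _
    calc angle (y w) (y z') - angle (y w) (y z) ≤ angle (y z) (y z') := by
          linarith [angle_le_angle_add_angle (y w) (y z) (y z')]
      _ ≤ 2 * arcsin ((z' - z) / 2) :=
          hchord z (Ico_subset_Icc_self hz) z' ⟨by linarith [hz.1], hz'.2⟩ hz'.1.le
      _ = _ := by simp

theorem cos_sub_le_inner_of_lipschitzOnWith {y : ℝ → E} {w v : ℝ} (hwv : w ≤ v)
    (hvw : v - w ≤ π) (hy : LipschitzOnWith 1 y (Icc w v))
    (hnorm : ∀ t ∈ Icc w v, ‖y t‖ = 1) : cos (v - w) ≤ ⟪y w, y v⟫ := by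
  rw [← cos_angle_mul_norm_mul_norm, hnorm w ⟨le_rfl, hwv⟩, hnorm v ⟨hwv, le_rfl⟩, mul_one,
    mul_one]
  exact cos_le_cos_of_nonneg_of_le_pi (angle_nonneg _ _) hvw
    (angle_le_sub_of_lipschitzOnWith hwv hy hnorm)

theorem integral_le_inner_sub_of_le_inner_deriv {f : ℝ → E} (hf : ContDiff ℝ 1 f) {g : ℝ → ℝ}
    (hg : Continuous g) {p q : ℝ} (hpq : p ≤ q) (c : E)
    (h : ∀ v ∈ Icc p q, g v ≤ ⟪deriv f v, c⟫) :
    ∫ v in p..q, g v ≤ ⟪f q - f p, c⟫ := by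
  have hcont : Continuous fun v => ⟪deriv f v, c⟫ :=
    (hf.continuous_deriv le_rfl).inner continuous_const
  have hftc : ⟪f q - f p, c⟫ = ∫ v in p..q, ⟪deriv f v, c⟫ := by
    rw [intervalIntegral.integral_eq_sub_of_hasDerivAt (f := fun v => ⟪f v, c⟫)
      (fun v _ => ?_) (hcont.intervalIntegrable p q), inner_sub_left]
    simpa using (hf.differentiable one_ne_zero v).hasDerivAt.inner ℝ (hasDerivAt_const v c)
  rw [hftc]
  exact intervalIntegral.integral_mono_on hpq (hg.intervalIntegrable p q)
    (hcont.intervalIntegrable p q) h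

theorem inner_sub_sub_nonneg_of_norm_deriv_deriv_le_one {x : ℝ → E} (hx : ContDiff ℝ 2 x)
    {s t u : ℝ} (hst : s ≤ t) (htu : t ≤ u) (hus : u - s ≤ π)
    (hunit : ∀ r ∈ Icc s u, ‖deriv x r‖ = 1) (hcurv : ∀ r ∈ Icc s u, ‖deriv (deriv x) r‖ ≤ 1) :
    0 ≤ ⟪x u - x t, x t - x s⟫ := by
  have hx₁ : ContDiff ℝ 1 x := hx.of_le one_le_two
  have hx' : ContDiff ℝ 1 (deriv x) := hx.deriv'
  have hlip : LipschitzOnWith 1 (deriv x) (Icc s u) :=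
    (convex_Icc s u).lipschitzOnWith_of_nnnorm_deriv_le
      (fun r _ => hx'.differentiable one_ne_zero r)
      (fun r hr => by simpa [← NNReal.coe_le_coe] using hcurv r hr)
  have htangent : ∀ w ∈ Icc s t, ∀ v ∈ Icc t u, cos (v - w) ≤ ⟪deriv x v, deriv x w⟫ := by
    intro w hw v hv
    rw [real_inner_comm]
    exact cos_sub_le_inner_of_lipschitzOnWith (hw.2.trans hv.1) (by linarith [hw.1, hv.2])
      (hlip.mono (Icc_subset_Icc hw.1 hv.2))
      (fun r hr => hunit r ⟨hw.1.trans hr.1, hr.2.trans hv.2⟩)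
  have hinner : ∀ w ∈ Icc s t, sin (u - w) - sin (t - w) ≤ ⟪deriv x w, x u - x t⟫ := by
    intro w hw
    have := integral_le_inner_sub_of_le_inner_deriv hx₁ (by fun_prop) htu (deriv x w)
      (htangent w hw)
    simpa [intervalIntegral.integral_comp_sub_right, real_inner_comm] using this
  have hsin (r : ℝ) : IntervalIntegrable (fun w => sin (r - w)) MeasureTheory.volume s t :=
    (by fun_prop : Continuous fun w => sin (r - w)).intervalIntegrable s t
  have houter := integral_le_inner_sub_of_le_inner_deriv hx₁ (by fun_prop) hst (x u - x t) hinner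
  rw [intervalIntegral.integral_sub (hsin u) (hsin t)] at houter
  simp only [intervalIntegral.integral_comp_sub_left fun w => sin w, integral_sin, sub_self,
    cos_zero] at houter
  have htrig := one_add_cos_add_le_cos_add_cos (sub_nonneg.2 htu) (sub_nonneg.2 hst)
    (by linarith)
  rw [sub_add_sub_cancel] at htrig
  rw [real_inner_comm]
  linarith

theorem dist_le_dist_of_mem_segment_of_inner_nonneg {a b c d p q : E}
    (hb : 0 ≤ ⟪c - b, b - a⟫) (hc : 0 ≤ ⟪d - c, c - b⟫)
    (hp : p ∈ segment ℝ a b) (hq : q ∈ segment ℝ c d) : dist b c ≤ dist p q := by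
  rw [segment_symm, segment_eq_image'] at hp
  rw [segment_eq_image'] at hq
  obtain ⟨α, hα, rfl⟩ := hp
  obtain ⟨β, hβ, rfl⟩ := hq
  have hproj : ‖c - b‖ ^ 2 ≤ ⟪c + β • (d - c) - (b + α • (a - b)), c - b⟫ := by
    rw [show c + β • (d - c) - (b + α • (a - b)) = (c - b) + β • (d - c) + α • (b - a) by module,
      inner_add_left, inner_add_left, real_inner_smul_left, real_inner_smul_left,
      real_inner_self_eq_norm_sq]
    nlinarith [hα.1, hβ.1, real_inner_comm (c - b) (b - a)]
  rw [dist_comm, dist_comm (b + _), dist_eq_norm, dist_eq_norm]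
  rcases (norm_nonneg (c - b)).eq_or_lt with h0 | hpos
  · rw [← h0]; exact norm_nonneg _
  · refine le_of_mul_le_mul_right ?_ hpos
    nlinarith [real_inner_le_norm (c + β • (d - c) - (b + α • (a - b))) (c - b)]

/-- For four points in order along an arc of length `≤ π` of a unit-speed curve with
curvature `≤ 1`, the minimum distance between the chords `[x(a),x(b)]` and
`[x(c),x(d)]` is realized at the closest endpoints `x(b)`, `x(c)`. -/
theorem min_dist_segments_at_endpoints (x : ℝ → EuclideanSpace ℝ (Fin 3))
    (hC2 : ContDiff ℝ 2 x)
    (hunit : ∀ t ∈ Set.Icc 0 Real.pi, ‖deriv x t‖ = 1)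
    (hcurv : ∀ u ∈ Set.Icc 0 Real.pi, ‖deriv (deriv x) u‖ ≤ 1)
    (a b c d : ℝ) (ha : 0 ≤ a) (hab : a < b) (hbc : b < c) (hcd : c < d)
    (hd : d ≤ Real.pi) :
    sInf (Set.image2 dist (segment ℝ (x a) (x b)) (segment ℝ (x c) (x d)))
      = dist (x b) (x c) := by
  have hac : Icc a c ⊆ Icc 0 π := Icc_subset_Icc ha (by linarith)
  have hbd : Icc b d ⊆ Icc 0 π := Icc_subset_Icc (by linarith) hd
  have habc := inner_sub_sub_nonneg_of_norm_deriv_deriv_le_one hC2 hab.le hbc.le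
    (by linarith) (fun r hr => hunit r (hac hr)) (fun r hr => hcurv r (hac hr))
  have hbcd := inner_sub_sub_nonneg_of_norm_deriv_deriv_le_one hC2 hbc.le hcd.le
    (by linarith) (fun r hr => hunit r (hbd hr)) (fun r hr => hcurv r (hbd hr))
  refine IsLeast.csInf_eq ⟨mem_image2_of_mem (right_mem_segment ℝ _ _)
    (left_mem_segment ℝ _ _), ?_⟩
  rintro _ ⟨p, hp, q, hq, rfl⟩
  exact dist_le_dist_of_mem_segment_of_inner_nonneg habc hbcd hp hq
end

section
/- Let α be a C² smooth arc in ℝ³ of length δ whose radius of curvature is everywhere ≥ r ≥ δ, and let e be the chord joining the endpoints of α. Then every point of α is at distance at most δ²/(√48 · r) from the segment e. -/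
/-!
Subtracting the affine parametrisation of the chord from the arc leaves a curve `g` that vanishes
at both ends and has `‖g''‖ ≤ 1/r`. Composing with a norming functional for `g t` gives a real
function `φ` with `φ'' ≥ -1/r` vanishing at both ends; adding the parabola `(s - a)(s - b)/(2r)`
makes it convex, hence nonpositive, so `‖g t‖ ≤ t(δ - t)/(2r) ≤ δ²/(8r) ≤ δ²/(√48 r)`.
-/

open Set Metric AffineMap

theorem le_mul_of_deriv2_ge_of_eq_zero {φ φ' φ'' : ℝ → ℝ} {a b M t : ℝ}
    (hφ : ∀ s ∈ Icc a b, HasDerivAt φ (φ' s) s) (hφ' : ∀ s ∈ Icc a b, HasDerivAt φ' (φ'' s) s)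
    (hM : ∀ s ∈ Icc a b, -M ≤ φ'' s) (ha : φ a = 0) (hb : φ b = 0) (ht : t ∈ Icc a b) :
    φ t ≤ M / 2 * ((t - a) * (b - t)) := by
  set p : ℝ → ℝ := fun s ↦ M / 2 * ((s - a) * (s - b))
  have hp (s : ℝ) : HasDerivAt p (M / 2 * (2 * s - a - b)) s := by
    refine ((((hasDerivAt_id' s).sub_const a).fun_mul ((hasDerivAt_id' s).sub_const b)).const_mul
      (M / 2)).congr_deriv ?_
    ring
  have hp' (s : ℝ) : HasDerivAt (fun s ↦ M / 2 * (2 * s - a - b)) M s := by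
    refine (((((hasDerivAt_id' s).const_mul 2).sub_const a).sub_const b).const_mul
      (M / 2)).congr_deriv ?_
    ring
  have hconv : ConvexOn ℝ (Icc a b) (φ + p) := by
    refine convexOn_of_hasDerivWithinAt2_nonneg (convex_Icc a b)
      (f' := fun s ↦ φ' s + M / 2 * (2 * s - a - b)) (f'' := fun s ↦ φ'' s + M)
      (fun s hs ↦ ((hφ s hs).add (hp s)).continuousAt.continuousWithinAt) (fun s hs ↦ ?_)
      (fun s hs ↦ ?_) (fun s hs ↦ ?_) <;> rw [interior_Icc] at hs
    · exact ((hφ s (Ioo_subset_Icc_self hs)).add (hp s)).hasDerivWithinAt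
    · exact ((hφ' s (Ioo_subset_Icc_self hs)).add (hp' s)).hasDerivWithinAt
    · linarith [hM s (Ioo_subset_Icc_self hs)]
  have hab : a ≤ b := ht.1.trans ht.2
  have := hconv.le_max_of_mem_Icc (left_mem_Icc.2 hab) (right_mem_Icc.2 hab) ht
  simp only [Pi.add_apply, p, ha, hb, sub_self, zero_mul, mul_zero, add_zero, max_self] at this
  linarith

theorem norm_le_of_norm_deriv2_le_of_eq_zero {E : Type*} [NormedAddCommGroup E] [NormedSpace ℝ E]
    {g g' g'' : ℝ → E} {a b M t : ℝ}
    (hg : ∀ s ∈ Icc a b, HasDerivAt g (g' s) s) (hg' : ∀ s ∈ Icc a b, HasDerivAt g' (g'' s) s)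
    (hM : ∀ s ∈ Icc a b, ‖g'' s‖ ≤ M) (ha : g a = 0) (hb : g b = 0) (ht : t ∈ Icc a b) :
    ‖g t‖ ≤ M / 2 * ((t - a) * (b - t)) := by
  obtain ⟨ℓ, hℓ, hℓt⟩ := exists_dual_vector'' ℝ (g t)
  have hℓM (s : ℝ) (hs : s ∈ Icc a b) : -M ≤ ℓ (g'' s) := by
    have := (ℓ.le_of_opNorm_le hℓ (g'' s)).trans_eq (one_mul _)
    linarith [neg_abs_le (ℓ (g'' s)), Real.norm_eq_abs (ℓ (g'' s)), hM s hs]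
  have := le_mul_of_deriv2_ge_of_eq_zero (φ := ℓ ∘ g) (φ' := ℓ ∘ g') (φ'' := ℓ ∘ g'')
    (fun s hs ↦ ℓ.hasFDerivAt.comp_hasDerivAt s (hg s hs))
    (fun s hs ↦ ℓ.hasFDerivAt.comp_hasDerivAt s (hg' s hs)) hℓM (by simp [ha]) (by simp [hb]) ht
  simpa [hℓt] using this

theorem norm_sub_lineMap_le_of_norm_deriv2_le {E : Type*} [NormedAddCommGroup E]
    [NormedSpace ℝ E] {f f' f'' : ℝ → E} {a b M t : ℝ} (hab : a < b)
    (hf : ∀ s ∈ Icc a b, HasDerivAt f (f' s) s) (hf' : ∀ s ∈ Icc a b, HasDerivAt f' (f'' s) s)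
    (hM : ∀ s ∈ Icc a b, ‖f'' s‖ ≤ M) (ht : t ∈ Icc a b) :
    ‖f t - lineMap (f a) (f b) ((t - a) / (b - a))‖ ≤ M / 2 * ((t - a) * (b - t)) := by
  set c : ℝ → E := fun s ↦ lineMap (f a) (f b) ((s - a) / (b - a))
  have hc (s : ℝ) : HasDerivAt c ((b - a)⁻¹ • (f b - f a)) s :=
    ((hasDerivAt_lineMap (a := f a) (b := f b)).scomp s
      (((hasDerivAt_id' s).sub_const a).div_const (b - a))).congr_deriv (by rw [one_div])
  refine norm_le_of_norm_deriv2_le_of_eq_zero (g := fun s ↦ f s - c s)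
    (g' := fun s ↦ f' s - (b - a)⁻¹ • (f b - f a)) (g'' := f'')
    (fun s hs ↦ (hf s hs).sub (hc s)) (fun s hs ↦ ?_) hM ?_ ?_ ht
  · simpa using (hf' s hs).sub_const ((b - a)⁻¹ • (f b - f a))
  · simp [c]
  · simp [c, div_self (sub_ne_zero.2 hab.ne')]

theorem arc_close_to_chord_general (r δ : ℝ) (hδ : 0 < δ) (hδr : δ ≤ r)
    (x : ℝ → EuclideanSpace ℝ (Fin 3)) (hC2 : ContDiff ℝ 2 x)
    (hcurv : ∀ u ∈ Set.Icc 0 δ, ‖deriv (deriv x) u‖ ≤ 1/r) :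
    ∀ t ∈ Set.Icc 0 δ,
      Metric.infDist (x t) (segment ℝ (x 0) (x δ)) ≤ δ^2/(Real.sqrt 48 * r) := by
  intro t ht
  have hr : 0 < r := hδ.trans_le hδr
  have hdev := norm_sub_lineMap_le_of_norm_deriv2_le hδ
    (fun s _ ↦ (hC2.differentiable two_ne_zero s).hasDerivAt)
    (fun s _ ↦ (hC2.differentiable_deriv_two s).hasDerivAt) hcurv ht
  simp only [sub_zero] at hdev
  have hmem : lineMap (x 0) (x δ) (t / δ) ∈ segment ℝ (x 0) (x δ) :=
    lineMap_mem_segment ℝ _ _ ⟨div_nonneg ht.1 hδ.le, div_le_one_of_le₀ ht.2 hδ.le⟩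
  have hsqrt : Real.sqrt 48 ≤ 8 := Real.sqrt_le_iff.2 ⟨by norm_num, by norm_num⟩
  calc Metric.infDist (x t) (segment ℝ (x 0) (x δ))
      ≤ ‖x t - lineMap (x 0) (x δ) (t / δ)‖ :=
        (infDist_le_dist_of_mem hmem).trans_eq (dist_eq_norm _ _)
    _ ≤ 1 / r / 2 * (t * (δ - t)) := hdev
    _ ≤ 1 / r / 2 * (δ ^ 2 / 4) := by gcongr; nlinarith [sq_nonneg (δ - 2 * t)]
    _ = δ ^ 2 / (8 * r) := by field_simp; ring
    _ ≤ δ ^ 2 / (Real.sqrt 48 * r) := by gcongr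

/-- Every point of a `C²` arc of length `δ ≤ r` with curvature `≤ 1/r` lies within
distance `δ²/(√48 · r)` of the chord joining its endpoints. -/
theorem arc_close_to_chord (r δ : ℝ) (hδ : 0 < δ) (hδr : δ ≤ r)
    (x : ℝ → EuclideanSpace ℝ (Fin 3)) (hC2 : ContDiff ℝ 2 x)
    (hunit : ∀ t ∈ Set.Icc 0 δ, ‖deriv x t‖ = 1)
    (hcurv : ∀ u ∈ Set.Icc 0 δ, ‖deriv (deriv x) u‖ ≤ 1/r) :
    ∀ t ∈ Set.Icc 0 δ,
      Metric.infDist (x t) (segment ℝ (x 0) (x δ)) ≤ δ^2/(Real.sqrt 48 * r) :=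
  arc_close_to_chord_general r δ hδ hδr x hC2 hcurv
end

section
/- Let α, β be C² smooth arcs in ℝ³, each of length δ, each with radius of curvature everywhere ≥ r ≥ δ. Let e, f be the chords joining the endpoints of α and β respectively. Then |MD(e,f) - MD(α,β)| ≤ √3·δ²/(6r) ≤ (√3/6)·r, where MD denotes the minimum Euclidean distance between two sets. -/
/-!
Along an arc `f` on `[a, b]` with `‖f''‖ ≤ M`, the first-order Taylor expansions of `f a` and
`f b` around `f t` combine, with the barycentric weights of `t`, into the point of the chord
at the same parameter, with error at most `M (t - a) (b - t) / 2 ≤ M (b - a)² / 8`. So each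
arc and its chord are within `δ² / (8r)` of each other in both directions, and the minimum
distance between the arcs differs from that between the chords by at most `δ² / (4r)`,
which is below `√3 δ² / (6r)`.
-/

open Set

section
variable {E : Type*} [NormedAddCommGroup E] [NormedSpace ℝ E] {f f' : ℝ → E} {M t c : ℝ}

theorem norm_image_sub_sub_smul_deriv_le_of_le (htc : t ≤ c)
    (hf : ∀ s ∈ Icc t c, HasDerivAt f (f' s) s)
    (hf' : ∀ s ∈ Icc t c, ‖f' s - f' t‖ ≤ M * (s - t)) :
    ‖f c - f t - (c - t) • f' t‖ ≤ M / 2 * (c - t) ^ 2 := by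
  have hφ : ∀ s ∈ Icc t c,
      HasDerivAt (fun s ↦ f s - f t - (s - t) • f' t) (f' s - f' t) s := fun s hs ↦
    (((hf s hs).sub_const (f t)).sub
      (((hasDerivAt_id' s).sub_const t).smul_const (f' t))).congr_deriv (by rw [one_smul])
  have hB : ∀ s, HasDerivAt (fun s ↦ M / 2 * (s - t) ^ 2) (M * (s - t)) s := fun s ↦
    ((((hasDerivAt_id' s).sub_const t).pow 2).const_mul (M / 2)).congr_deriv (by ring)
  exact image_norm_le_of_norm_deriv_right_le_deriv_boundary
    (fun s hs ↦ (hφ s hs).continuousAt.continuousWithinAt)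
    (fun s hs ↦ (hφ s (Ico_subset_Icc_self hs)).hasDerivWithinAt) (by simp) hB
    (fun s hs ↦ hf' s (Ico_subset_Icc_self hs)) (right_mem_Icc.2 htc)

theorem norm_image_sub_sub_smul_deriv_le (hf : ∀ s ∈ uIcc t c, HasDerivAt f (f' s) s)
    (hf' : ∀ s ∈ uIcc t c, ‖f' s - f' t‖ ≤ M * |s - t|) :
    ‖f c - f t - (c - t) • f' t‖ ≤ M / 2 * (c - t) ^ 2 := by
  rcases le_total t c with htc | hct
  · rw [uIcc_of_le htc] at hf hf'
    exact norm_image_sub_sub_smul_deriv_le_of_le htc hf fun s hs ↦ by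
      simpa [abs_of_nonneg (sub_nonneg.2 hs.1)] using hf' s hs
  -- reflect `[c, t]` through its midpoint, exchanging `c` and `t`
  rw [uIcc_of_ge hct] at hf hf'
  have hmem : ∀ s ∈ Icc c t, c + t - s ∈ Icc c t := fun s hs ↦
    ⟨by linarith [hs.2], by linarith [hs.1]⟩
  have := norm_image_sub_sub_smul_deriv_le_of_le hct (f := fun s ↦ f (c + t - s))
    (f' := fun s ↦ -f' (c + t - s)) (fun s hs ↦ (hf _ (hmem s hs)).comp_const_sub _ _)
    fun s hs ↦ by
      have h := hf' _ (hmem s hs)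
      rw [abs_of_nonpos (by linarith [hs.1])] at h
      rw [add_sub_cancel_left, neg_sub_neg, norm_sub_rev]
      exact h.trans_eq (by ring)
  rwa [add_sub_cancel_left, add_sub_cancel_right, smul_neg, ← neg_smul, neg_sub,
    ← neg_sub c t, neg_sq] at this

theorem norm_deriv_sub_deriv_le {D : Set ℝ} (hD : Convex ℝ D) (hf : ContDiff ℝ 2 f)
    (hM : ∀ u ∈ D, ‖deriv (deriv f) u‖ ≤ M) {s u : ℝ} (hs : s ∈ D) (hu : u ∈ D) :
    ‖deriv f s - deriv f u‖ ≤ M * |s - u| := by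
  have hf' : Differentiable ℝ (deriv f) :=
    ((contDiff_succ_iff_deriv (n := 1)).mp hf).2.2.differentiable one_ne_zero
  exact hD.norm_image_sub_le_of_norm_deriv_le (fun v _ ↦ hf' v) hM hu hs

variable {a b : ℝ}

theorem norm_sub_lineMap_le (hab : a < b) (hf : ContDiff ℝ 2 f)
    (hM : ∀ u ∈ Icc a b, ‖deriv (deriv f) u‖ ≤ M) (ht : t ∈ Icc a b) :
    ‖f t - AffineMap.lineMap (f a) (f b) ((t - a) / (b - a))‖ ≤ M / 8 * (b - a) ^ 2 := by
  have hM₀ : 0 ≤ M := (norm_nonneg _).trans (hM a (left_mem_Icc.2 hab.le))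
  have taylor : ∀ c ∈ Icc a b,
      ‖f c - f t - (c - t) • deriv f t‖ ≤ M / 2 * (c - t) ^ 2 := fun c hc ↦
    have hsub : uIcc t c ⊆ Icc a b := uIcc_subset_Icc ht hc
    norm_image_sub_sub_smul_deriv_le
      (fun s _ ↦ (hf.differentiable two_ne_zero s).hasDerivAt)
      (fun s hs ↦ norm_deriv_sub_deriv_le (convex_Icc a b) hf hM (hsub hs) ht)
  have hba : 0 < b - a := sub_pos.2 hab
  set l := (t - a) / (b - a)
  have hl : l * (b - a) = t - a := div_mul_cancel₀ _ hba.ne'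
  have hl₀ : 0 ≤ l := div_nonneg (sub_nonneg.2 ht.1) hba.le
  have hl₁ : 0 ≤ 1 - l := by
    rw [sub_nonneg, div_le_one hba]
    linarith [ht.2]
  clear_value l
  -- the `deriv f t` terms cancel because `l` is the barycentric coordinate of `t` in `[a, b]`
  have hsplit : f t - AffineMap.lineMap (f a) (f b) l = -((1 - l) •
      (f a - f t - (a - t) • deriv f t) + l • (f b - f t - (b - t) • deriv f t)) := by
    rw [AffineMap.lineMap_apply_module]
    match_scalars
    · ring
    · ring
    · ring
    · linear_combination -hl
  calc ‖f t - AffineMap.lineMap (f a) (f b) l‖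
      ≤ (1 - l) * (M / 2 * (a - t) ^ 2) + l * (M / 2 * (b - t) ^ 2) := by
        rw [hsplit, norm_neg]
        refine (norm_add_le _ _).trans (add_le_add ?_ ?_)
        · rw [norm_smul, Real.norm_of_nonneg hl₁]
          gcongr
          exact taylor a (left_mem_Icc.2 hab.le)
        · rw [norm_smul, Real.norm_of_nonneg hl₀]
          gcongr
          exact taylor b (right_mem_Icc.2 hab.le)
    _ = M / 2 * ((t - a) * (b - t)) := by
        linear_combination M / 2 * (a + b - 2 * t) * hl
    _ ≤ M / 8 * (b - a) ^ 2 := by nlinarith [sq_nonneg (2 * t - a - b)]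

theorem exists_mem_image_dist_le_of_mem_segment (hab : a < b) (hf : ContDiff ℝ 2 f)
    (hM : ∀ u ∈ Icc a b, ‖deriv (deriv f) u‖ ≤ M) {p : E}
    (hp : p ∈ segment ℝ (f a) (f b)) :
    ∃ q ∈ f '' Icc a b, dist p q ≤ M / 8 * (b - a) ^ 2 := by
  rw [segment_eq_image_lineMap] at hp
  obtain ⟨θ, hθ, rfl⟩ := hp
  have ht : a + θ * (b - a) ∈ Icc a b :=
    ⟨by nlinarith [hθ.1], by nlinarith [hθ.2]⟩
  have hθ' : (a + θ * (b - a) - a) / (b - a) = θ := by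
    field_simp [(sub_pos.2 hab).ne']
    ring
  refine ⟨f (a + θ * (b - a)), mem_image_of_mem f ht, ?_⟩
  rw [dist_comm, dist_eq_norm]
  simpa only [hθ'] using norm_sub_lineMap_le hab hf hM ht

theorem exists_mem_segment_dist_le_of_mem_image (hab : a < b) (hf : ContDiff ℝ 2 f)
    (hM : ∀ u ∈ Icc a b, ‖deriv (deriv f) u‖ ≤ M) {q : E} (hq : q ∈ f '' Icc a b) :
    ∃ p ∈ segment ℝ (f a) (f b), dist q p ≤ M / 8 * (b - a) ^ 2 := by
  obtain ⟨t, ht, rfl⟩ := hq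
  have hba : 0 < b - a := sub_pos.2 hab
  have hl : (t - a) / (b - a) ∈ Icc (0 : ℝ) 1 :=
    ⟨div_nonneg (sub_nonneg.2 ht.1) hba.le, (div_le_one hba).2 (by linarith [ht.2])⟩
  rw [segment_eq_image_lineMap]
  refine ⟨_, mem_image_of_mem _ hl, ?_⟩
  rw [dist_eq_norm]
  exact norm_sub_lineMap_le hab hf hM ht

end

theorem sInf_image2_dist_le_add {α : Type*} [PseudoMetricSpace α] {A B A' B' : Set α}
    (hA' : A'.Nonempty) (hB' : B'.Nonempty) {ε₁ ε₂ : ℝ}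
    (hA : ∀ a' ∈ A', ∃ a ∈ A, dist a' a ≤ ε₁)
    (hB : ∀ b' ∈ B', ∃ b ∈ B, dist b' b ≤ ε₂) :
    sInf (image2 dist A B) ≤ sInf (image2 dist A' B') + (ε₁ + ε₂) := by
  have hbdd : BddBelow (image2 dist A B) :=
    ⟨0, by rintro _ ⟨a, -, b, -, rfl⟩; exact dist_nonneg⟩
  rw [← sub_le_iff_le_add]
  refine le_csInf (hA'.image2 hB') ?_
  rintro _ ⟨a', ha', b', hb', rfl⟩
  obtain ⟨a, ha, haa'⟩ := hA a' ha'
  obtain ⟨b, hb, hbb'⟩ := hB b' hb'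
  have := csInf_le hbdd (mem_image2_of_mem ha hb)
  linarith [dist_triangle4 a a' b' b, dist_comm a a']

theorem min_dist_arcs_vs_chords_general (r δ : ℝ) (hδ : 0 < δ) (hδr : δ ≤ r)
    (x y : ℝ → EuclideanSpace ℝ (Fin 3))
    (hxC2 : ContDiff ℝ 2 x) (hyC2 : ContDiff ℝ 2 y)
    (hxcurv : ∀ u ∈ Set.Icc 0 δ, ‖deriv (deriv x) u‖ ≤ 1/r)
    (hycurv : ∀ u ∈ Set.Icc 0 δ, ‖deriv (deriv y) u‖ ≤ 1/r) :
    |sInf (Set.image2 dist (segment ℝ (x 0) (x δ)) (segment ℝ (y 0) (y δ)))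
      - sInf (Set.image2 dist (x '' Set.Icc 0 δ) (y '' Set.Icc 0 δ))|
        ≤ Real.sqrt 3 * δ^2 / (6*r) ∧
    Real.sqrt 3 * δ^2 / (6*r) ≤ (Real.sqrt 3 / 6) * r := by
  have hr : 0 < r := hδ.trans_le hδr
  have h0δ : (0 : ℝ) ∈ Icc 0 δ := left_mem_Icc.2 hδ.le
  have hchords := sInf_image2_dist_le_add ⟨_, mem_image_of_mem x h0δ⟩
    ⟨_, mem_image_of_mem y h0δ⟩
    (fun _ ↦ exists_mem_segment_dist_le_of_mem_image hδ hxC2 hxcurv)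
    (fun _ ↦ exists_mem_segment_dist_le_of_mem_image hδ hyC2 hycurv)
  have harcs := sInf_image2_dist_le_add ⟨_, left_mem_segment ℝ (x 0) (x δ)⟩
    ⟨_, left_mem_segment ℝ (y 0) (y δ)⟩
    (fun _ ↦ exists_mem_image_dist_le_of_mem_segment hδ hxC2 hxcurv)
    (fun _ ↦ exists_mem_image_dist_le_of_mem_segment hδ hyC2 hycurv)
  have hsqrt : 3 / 2 ≤ Real.sqrt 3 :=
    (Real.le_sqrt (by norm_num) (by norm_num)).2 (by norm_num)
  have hε : 1 / r / 8 * (δ - 0) ^ 2 + 1 / r / 8 * (δ - 0) ^ 2 ≤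
      Real.sqrt 3 * δ ^ 2 / (6 * r) :=
    calc _ = 3 / 2 * δ ^ 2 / (6 * r) := by field_simp; ring
      _ ≤ _ := by gcongr
  refine ⟨abs_sub_le_iff.2 ⟨by linarith, by linarith⟩, ?_⟩
  calc Real.sqrt 3 * δ ^ 2 / (6 * r) ≤ Real.sqrt 3 * r ^ 2 / (6 * r) := by gcongr
    _ = Real.sqrt 3 / 6 * r := by field_simp

/-- The minimum distance between two arcs of length `δ ≤ r` with curvature `≤ 1/r`
differs from the minimum distance between their chords by at most `√3·δ²/(6r) ≤ √3·r/6`. -/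
theorem min_dist_arcs_vs_chords (r δ : ℝ) (hδ : 0 < δ) (hδr : δ ≤ r)
    (x y : ℝ → EuclideanSpace ℝ (Fin 3))
    (hxC2 : ContDiff ℝ 2 x) (hyC2 : ContDiff ℝ 2 y)
    (hxunit : ∀ t ∈ Set.Icc 0 δ, ‖deriv x t‖ = 1)
    (hyunit : ∀ t ∈ Set.Icc 0 δ, ‖deriv y t‖ = 1)
    (hxcurv : ∀ u ∈ Set.Icc 0 δ, ‖deriv (deriv x) u‖ ≤ 1/r)
    (hycurv : ∀ u ∈ Set.Icc 0 δ, ‖deriv (deriv y) u‖ ≤ 1/r) :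
    |sInf (Set.image2 dist (segment ℝ (x 0) (x δ)) (segment ℝ (y 0) (y δ)))
      - sInf (Set.image2 dist (x '' Set.Icc 0 δ) (y '' Set.Icc 0 δ))|
        ≤ Real.sqrt 3 * δ^2 / (6*r) ∧
    Real.sqrt 3 * δ^2 / (6*r) ≤ (Real.sqrt 3 / 6) * r :=
  min_dist_arcs_vs_chords_general r δ hδ hδr x y hxC2 hyC2 hxcurv hycurv
end
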